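/- Let A, B be the companion matrices of f_47 and g_47, T = A⁻¹B, and let Ω_47 be the antisymmetric matrix with first row (0,29,-50,51,-28,1) and Toeplitz pattern. The image of T - I is spanned by x₁ = (-5,-8,-10,-8,-5,0). Moreover, for x₂ = (491566906334, 537748595482, 224774947812, 73905511690, -18977654566, 0), one has x₁ᵀ Ω_47 x₂ = 0 and x₁, x₂ are linearly independent. -/
import Mathlib

open Matrix

set_option maxHeartbeats 1000000

def A47 : Matrix (Fin 6) (Fin 6) ℚ :=
  !![0,0,0,0,0,-1; 1,0,0,0,0,1; 0,1,0,0,0,0; 0,0,1,0,0,0; 0,0,0,1,0,0; 0,0,0,0,1,1]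

def B47 : Matrix (Fin 6) (Fin 6) ℚ :=
  !![0,0,0,0,0,-1; 1,0,0,0,0,-4; 0,1,0,0,0,-8; 0,0,1,0,0,-10; 0,0,0,1,0,-8; 0,0,0,0,1,-4]

def Omega47 : Matrix (Fin 6) (Fin 6) ℚ :=
  !![0,29,-50,51,-28,1; -29,0,29,-50,51,-28; 50,-29,0,29,-50,51;
     -51,50,-29,0,29,-50; 28,-51,50,-29,0,29; -1,28,-51,50,-29,0]

noncomputable def T47 : Matrix (Fin 6) (Fin 6) ℚ := A47⁻¹ * B47

def x1_47 : Fin 6 → ℚ := ![-5, -8, -10, -8, -5, 0]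

def x2_47 : Fin 6 → ℚ :=
  ![491566906334, 537748595482, 224774947812, 73905511690, -18977654566, 0]

section helpers

variable {α : Type*}

@[simp] lemma vecHead_const {n : ℕ} (c : α) : vecHead (fun _ : Fin (n+1) => c) = c := rfl
@[simp] lemma vecTail_const {n : ℕ} (c : α) : vecTail (fun _ : Fin (n+1) => c) = fun _ => c := rfl

@[simp] lemma consF2_1 (x : α) (u : Fin 1 → α) : vecCons x u (1 : Fin 2) = u 0 := rfl
@[simp] lemma consF3_1 (x : α) (u : Fin 2 → α) : vecCons x u (1 : Fin 3) = u 0 := rfl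
@[simp] lemma consF3_2 (x : α) (u : Fin 2 → α) : vecCons x u (2 : Fin 3) = u 1 := rfl
@[simp] lemma consF4_1 (x : α) (u : Fin 3 → α) : vecCons x u (1 : Fin 4) = u 0 := rfl
@[simp] lemma consF4_2 (x : α) (u : Fin 3 → α) : vecCons x u (2 : Fin 4) = u 1 := rfl
@[simp] lemma consF4_3 (x : α) (u : Fin 3 → α) : vecCons x u (3 : Fin 4) = u 2 := rfl
@[simp] lemma consF5_1 (x : α) (u : Fin 4 → α) : vecCons x u (1 : Fin 5) = u 0 := rfl
@[simp] lemma consF5_2 (x : α) (u : Fin 4 → α) : vecCons x u (2 : Fin 5) = u 1 := rfl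
@[simp] lemma consF5_3 (x : α) (u : Fin 4 → α) : vecCons x u (3 : Fin 5) = u 2 := rfl
@[simp] lemma consF5_4 (x : α) (u : Fin 4 → α) : vecCons x u (4 : Fin 5) = u 3 := rfl
@[simp] lemma consF6_1 (x : α) (u : Fin 5 → α) : vecCons x u (1 : Fin 6) = u 0 := rfl
@[simp] lemma consF6_2 (x : α) (u : Fin 5 → α) : vecCons x u (2 : Fin 6) = u 1 := rfl
@[simp] lemma consF6_3 (x : α) (u : Fin 5 → α) : vecCons x u (3 : Fin 6) = u 2 := rfl
@[simp] lemma consF6_4 (x : α) (u : Fin 5 → α) : vecCons x u (4 : Fin 6) = u 3 := rfl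
@[simp] lemma consF6_5 (x : α) (u : Fin 5 → α) : vecCons x u (5 : Fin 6) = u 4 := rfl

end helpers

def Ainv47 : Matrix (Fin 6) (Fin 6) ℚ :=
  !![1,1,0,0,0,0; 0,0,1,0,0,0; 0,0,0,1,0,0; 0,0,0,0,1,0; 1,0,0,0,0,1; -1,0,0,0,0,0]

def M47 : Matrix (Fin 6) (Fin 6) ℚ :=
  !![0,0,0,0,0,-5; 0,0,0,0,0,-8; 0,0,0,0,0,-10; 0,0,0,0,0,-8; 0,0,0,0,0,-5; 0,0,0,0,0,0]

def One6 : Matrix (Fin 6) (Fin 6) ℚ :=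
  !![1,0,0,0,0,0; 0,1,0,0,0,0; 0,0,1,0,0,0; 0,0,0,1,0,0; 0,0,0,0,1,0; 0,0,0,0,0,1]

lemma one6_eq : (1 : Matrix (Fin 6) (Fin 6) ℚ) = One6 := by
  ext i j
  fin_cases i <;> fin_cases j <;> simp [One6, Matrix.one_apply]

lemma A47_inv : A47⁻¹ = Ainv47 := by
  apply inv_eq_right_inv
  rw [one6_eq]
  ext i j
  fin_cases i <;> fin_cases j <;>
    simp [A47, Ainv47, One6, Matrix.mul_apply, Fin.sum_univ_six] <;> norm_num

lemma T47_sub_one : T47 - 1 = M47 := by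
  rw [show T47 = Ainv47 * B47 by rw [T47, A47_inv], one6_eq]
  ext i j
  fin_cases i <;> fin_cases j <;>
    simp [Ainv47, B47, M47, One6, Matrix.mul_apply, Fin.sum_univ_six] <;> norm_num

lemma M47_mulVec (v : Fin 6 → ℚ) : M47 *ᵥ v = (v 5) • x1_47 := by
  funext i
  fin_cases i <;>
    simp [M47, Matrix.mulVec, dotProduct, Fin.sum_univ_six, x1_47] <;> ring

theorem C47_orthogonal_directions :
    LinearMap.range (T47 - 1).mulVecLin = Submodule.span ℚ {x1_47} ∧
    x1_47 ⬝ᵥ (Omega47 *ᵥ x2_47) = 0 ∧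
    LinearIndependent ℚ ![x1_47, x2_47] := by
  refine ⟨?_, ?_, ?_⟩
  · rw [T47_sub_one]
    apply le_antisymm
    · rintro y ⟨v, rfl⟩
      rw [Matrix.mulVecLin_apply, M47_mulVec]
      exact Submodule.smul_mem _ _ (Submodule.mem_span_singleton_self _)
    · rw [Submodule.span_le, Set.singleton_subset_iff]
      refine ⟨![0,0,0,0,0,1], ?_⟩
      rw [Matrix.mulVecLin_apply, M47_mulVec]
      simp
  · simp [Matrix.mulVec, dotProduct, Fin.sum_univ_six, Omega47, x1_47, x2_47]
    norm_num
  · rw [LinearIndependent.pair_iff]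
    intro s t h
    have h0 := congrFun h 0
    have h1 := congrFun h 1
    simp [x1_47, x2_47] at h0 h1
    constructor <;> linarith
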